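/- arXiv:2201.06568 — 2 statements merged into one kernel-verified Lean document; each statement's English description precedes it below -/
import Mathlib

section
/- Let (φ_t) be a continuous flow on a compact metric space M and let (P,G,S) be a decomposition of D ⊂ M×ℝ⁺. If G has tail weak specification at every scale δ > 0, then for every M' > 0, G^{M'} has tail weak specification at every scale δ > 0. -/
open MeasureTheory Filter Set

section FlowDefs

variable {M : Type*} [MetricSpace M]

/-- The Bowen metric `d_t(x,y) = sup{d(φ_s x, φ_s y) : 0 ≤ s ≤ t}`. -/
noncomputable def bowenDist (φ : ℝ → M → M) (t : ℝ) (x y : M) : ℝ :=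
  sSup ((fun s => dist (φ s x) (φ s y)) '' Set.Icc 0 t)

/-- The open Bowen ball `B_t(x,ε)`. -/
def bowenBall (φ : ℝ → M → M) (t ε : ℝ) (x : M) : Set M :=
  {y | bowenDist φ t x y < ε}

/-- The closed Bowen ball `B̄_t(x,ε)`. -/
def closedBowenBall (φ : ℝ → M → M) (t ε : ℝ) (x : M) : Set M :=
  {y | bowenDist φ t x y ≤ ε}

/-- A `(t,δ)`-separated set. -/
def IsSeparatedSet (φ : ℝ → M → M) (t δ : ℝ) (E : Set M) : Prop :=
  ∀ ⦃x⦄, x ∈ E → ∀ ⦃y⦄, y ∈ E → x ≠ y → δ < bowenDist φ t x y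

/-- The Birkhoff integral `Φ_0(x,t) = ∫_0^t pot(φ_s x) ds`. -/
noncomputable def birkhoff (φ : ℝ → M → M) (pot : M → ℝ) (x : M) (t : ℝ) : ℝ :=
  ∫ s in (0:ℝ)..t, pot (φ s x)

/-- `Φ_ε(x,t)`: the supremum of Birkhoff integrals over the Bowen ball `B_t(x,ε)`
(for `ε = 0`, the Birkhoff integral itself). -/
noncomputable def PhiSup (φ : ℝ → M → M) (pot : M → ℝ) (ε : ℝ) (x : M) (t : ℝ) : ℝ :=
  if ε = 0 then birkhoff φ pot x t
  else sSup ((fun y => birkhoff φ pot y t) '' bowenBall φ t ε x)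

/-- The two-scale partition function `Λ(C, δ, ε, t)`. -/
noncomputable def partFn (φ : ℝ → M → M) (pot : M → ℝ) (C : Set (M × ℝ)) (δ ε t : ℝ) : ℝ :=
  sSup {r : ℝ | ∃ E : Finset M, (↑E : Set M) ⊆ {x | (x, t) ∈ C} ∧
    IsSeparatedSet φ t δ (↑E : Set M) ∧ r = ∑ x ∈ E, Real.exp (PhiSup φ pot ε x t)}

/-- The pressure `P(C, φ, δ, ε) = limsup_{t→∞} (1/t) log Λ(C,δ,ε,t)`. -/
noncomputable def presAt (φ : ℝ → M → M) (pot : M → ℝ) (C : Set (M × ℝ)) (δ ε : ℝ) : ℝ :=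
  Filter.limsup (fun t => Real.log (partFn φ pot C δ ε t) / t) Filter.atTop

/-- The topological pressure `P(φ) = lim_{δ→0} P(M×ℝ⁺, φ, δ, 0)`
(the limit equals the supremum over `δ > 0` by monotonicity). -/
noncomputable def topPres (φ : ℝ → M → M) (pot : M → ℝ) : ℝ :=
  ⨆ δ : Set.Ioi (0:ℝ), presAt φ pot Set.univ (δ : ℝ) 0

/-- The set of points where the flow is "expansive" at scale ε: the two-sided infinite
Bowen ball `Γ_ε(x)` is contained in a finite piece of orbit `φ_{[-s,s]}(x)`. -/
def ExpansivePts (φ : ℝ → M → M) (ε : ℝ) : Set M :=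
  {x | ∃ s > 0, {y | ∀ t : ℝ, dist (φ t x) (φ t y) ≤ ε} ⊆ (fun u => φ u x) '' Set.Icc (-s) s}

variable [MeasurableSpace M]

/-- A flow-invariant measure. -/
def FlowInvariant (φ : ℝ → M → M) (μ : Measure M) : Prop :=
  ∀ t : ℝ, MeasurePreserving (φ t) μ μ

/-- An ergodic measure for the flow: every flow-invariant measurable set has
measure `0` or `1`. -/
def FlowErgodic (φ : ℝ → M → M) (μ : Measure M) : Prop :=
  ∀ A : Set M, MeasurableSet A → (∀ t : ℝ, φ t ⁻¹' A = A) → μ A = 0 ∨ μ A = 1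

/-- The flow is almost expansive at scale ε if `Exp_ε` has full measure for every
ergodic flow-invariant Borel probability measure. -/
def AlmostExpansive (φ : ℝ → M → M) (ε : ℝ) : Prop :=
  ∀ μ : Measure M, IsProbabilityMeasure μ → FlowInvariant φ μ → FlowErgodic φ μ →
    μ (ExpansivePts φ ε) = 1

/-- A finite measurable partition of the space. -/
def IsMPartition (P : Finset (Set M)) : Prop :=
  (∀ A ∈ P, MeasurableSet A) ∧ (∀ A ∈ P, ∀ B ∈ P, A ≠ B → A ∩ B = ∅) ∧
    ⋃ A ∈ P, A = Set.univ

/-- The Shannon entropy of a finite partition. -/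
noncomputable def partEntropy (μ : Measure M) (P : Finset (Set M)) : ℝ :=
  ∑ A ∈ P, Real.negMulLog (μ A).toReal

/-- The join `⋁_{i<n} T^{-i} P` of a finite partition under a map `T`. -/
noncomputable def joinPart (T : M → M) (P : Finset (Set M)) (n : ℕ) : Finset (Set M) := by
  classical
  exact Finset.image (fun f : Fin n → {A // A ∈ P} => ⋂ i : Fin n, T^[(i : ℕ)] ⁻¹' (f i : Set M))
    Finset.univ

/-- The Kolmogorov–Sinai (measure-theoretic) entropy of `T` with respect to `μ`. -/
noncomputable def ksEntropy (μ : Measure M) (T : M → M) : ℝ :=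
  ⨆ P : {P : Finset (Set M) // IsMPartition P},
    Filter.liminf (fun n : ℕ => partEntropy μ (joinPart T (P : Finset (Set M)) n) / n)
      Filter.atTop

/-- An equilibrium state: a flow-invariant Borel probability measure with
`h_μ(φ_1) + ∫ pot dμ = P(pot)`. -/
def IsEqState (φ : ℝ → M → M) (pot : M → ℝ) (μ : Measure M) : Prop :=
  IsProbabilityMeasure μ ∧ FlowInvariant φ μ ∧
    ksEntropy μ (φ 1) + ∫ x, pot x ∂μ = topPres φ pot

end FlowDefs

section OrbitDefs

variable {M : Type*} [MetricSpace M]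

/-- A decomposition `(P, G, S)` of a collection `D` of orbit segments. -/
def IsDecomposition (φ : ℝ → M → M) (D PP GG SS : Set (M × ℝ)) (p g s : M → ℝ → ℝ) : Prop :=
  ∀ ⦃x : M⦄ ⦃t : ℝ⦄, (x, t) ∈ D →
    0 ≤ p x t ∧ 0 ≤ g x t ∧ 0 ≤ s x t ∧ p x t + g x t + s x t = t ∧
    (x, p x t) ∈ PP ∧ (φ (p x t) x, g x t) ∈ GG ∧ (φ (p x t + g x t) x, s x t) ∈ SS

/-- `G^{M'}`: orbit segments in `D` whose prefix and suffix in the decomposition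
are shorter than `M'`. -/
def GM (D : Set (M × ℝ)) (p s : M → ℝ → ℝ) (M' : ℝ) : Set (M × ℝ) :=
  {xt ∈ D | p xt.1 xt.2 < M' ∧ s xt.1 xt.2 < M'}

/-- `[C]`: the discrete-time enlargement of a collection of orbit segments. -/
def bracket (φ : ℝ → M → M) (C : Set (M × ℝ)) : Set (M × ℝ) :=
  {xt | ∃ n : ℕ, xt.2 = (n : ℝ) ∧ ∃ s ∈ Set.Ico (0:ℝ) 1, ∃ u ∈ Set.Ico (0:ℝ) 1,
    (φ (-s) xt.1, (n : ℝ) + s + u) ∈ C}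

/-- Weak specification at scale `δ` with maximum gap size `τ`. -/
def HasWeakSpec (φ : ℝ → M → M) (G : Set (M × ℝ)) (δ τ : ℝ) : Prop :=
  ∀ (k : ℕ) (xs : Fin k → M) (ts : Fin k → ℝ),
    (∀ i, (xs i, ts i) ∈ G) →
    ∃ (y : M) (gap : Fin k → ℝ),
      (∀ i, gap i ∈ Set.Icc (0:ℝ) τ) ∧ (∀ i : Fin k, (i : ℕ) = 0 → gap i = 0) ∧
      ∀ j : Fin k,
        bowenDist φ (ts j)
          (φ ((∑ i ∈ Finset.Iio j, ts i) + ∑ i ∈ Finset.Iic j, gap i) y) (xs j) < δ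

/-- Tail weak specification at scale `δ`: `G ∩ (M × [T₀,∞))` has weak specification
at scale `δ` for some `T₀ > 0`. -/
def HasTailWeakSpec (φ : ℝ → M → M) (G : Set (M × ℝ)) (δ : ℝ) : Prop :=
  ∃ T₀ > (0:ℝ), ∃ τ ≥ (0:ℝ), HasWeakSpec φ (G ∩ {xt | T₀ ≤ xt.2}) δ τ

/-- The Bowen property at scale `ε` on a collection `C` of orbit segments. -/
def HasBowenProp (φ : ℝ → M → M) (pot : M → ℝ) (C : Set (M × ℝ)) (ε : ℝ) : Prop :=
  ∃ K > (0:ℝ), ∀ ⦃x : M⦄ ⦃t : ℝ⦄, (x, t) ∈ C → ∀ y ∈ bowenBall φ t ε x,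
    |birkhoff φ pot x t - birkhoff φ pot y t| ≤ K

/-- `φ_{i,j}(C) = {(φ_i x, t−(i+j)) : (x,t) ∈ C}`. -/
def shiftSeg (φ : ℝ → M → M) (i j : ℝ) (C : Set (M × ℝ)) : Set (M × ℝ) :=
  (fun xt : M × ℝ => (φ i xt.1, xt.2 - (i + j))) '' C

end OrbitDefs


/-! Shadowing the core `(φ_p x, g)` of an orbit segment at a small enough scale also shadows the
whole segment, because its prefix and suffix are shorter than `M'` and the flow is uniformly
continuous for times in `[-M', M']`. Segments of `G^{M'}` must not overlap, so consecutive cores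
have to be shadowed with gaps of at least `2M'`; this is forced by inserting, between any two
cores, `n` copies of one fixed segment `(z, L)` of the tail of `G`, with `n L ≥ 2M'`. -/

section BigOperators

variable {β : Type*} [AddCommMonoid β]

theorem Fin.sum_Iio_eq_sum_range {k : ℕ} (f : ℕ → β) (j : Fin k) :
    ∑ i ∈ Finset.Iio j, f i = ∑ i ∈ Finset.range j, f i := by
  rw [← Nat.Iio_eq_range, ← Fin.map_valEmbedding_Iio, Finset.sum_map]
  rfl

theorem Fin.sum_Iic_eq_sum_range {k : ℕ} (f : ℕ → β) (j : Fin k) :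
    ∑ i ∈ Finset.Iic j, f i = ∑ i ∈ Finset.range (j + 1), f i := by
  rw [Nat.range_succ_eq_Iic, ← Fin.map_valEmbedding_Iic, Finset.sum_map]
  rfl

end BigOperators

theorem sub_sum_range_mem_Icc (S ℓ : ℕ → ℝ) (a : ℕ) {τ : ℝ} :
    ∀ N : ℕ, (∀ r < N, S (a + r + 1) - (S (a + r) + ℓ (a + r)) ∈ Icc 0 τ) →
      S (a + N) - (S a + ∑ r ∈ Finset.range N, ℓ (a + r)) ∈ Icc 0 (N * τ)
  | 0, _ => by simp
  | N + 1, h => by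
    have ih := sub_sum_range_mem_Icc S ℓ a N fun r hr => h r (by omega)
    have hN := h N (by omega)
    rw [Finset.sum_range_succ, ← add_assoc a N 1]
    push_cast
    constructor <;> linarith [ih.1, ih.2, hN.1, hN.2]

section Flow

variable {M : Type*} [MetricSpace M] {φ : ℝ → M → M}

theorem dist_le_bowenDist (hcont : Continuous fun q : ℝ × M => φ q.1 q.2)
    {t u : ℝ} (hu : u ∈ Icc 0 t) (x y : M) :
    dist (φ u x) (φ u y) ≤ bowenDist φ t x y := by
  have hc : Continuous fun s : ℝ => dist (φ s x) (φ s y) := by fun_prop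
  exact le_csSup ((isCompact_Icc.image hc).bddAbove) ⟨u, hu, rfl⟩

theorem bowenDist_le {t r : ℝ} {x y : M} (hr : 0 ≤ r)
    (h : ∀ u ∈ Icc 0 t, dist (φ u x) (φ u y) ≤ r) : bowenDist φ t x y ≤ r :=
  Real.sSup_le (by rintro _ ⟨u, hu, rfl⟩; exact h u hu) hr

theorem exists_dist_flow_lt [CompactSpace M] (hcont : Continuous fun q : ℝ × M => φ q.1 q.2)
    (T : ℝ) {ε : ℝ} (hε : 0 < ε) :
    ∃ δ > 0, ∀ a b : M, dist a b < δ → ∀ u : ℝ, |u| ≤ T → dist (φ u a) (φ u b) < ε := by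
  obtain ⟨δ, hδ, H⟩ := Metric.uniformContinuousOn_iff.mp
    ((isCompact_Icc.prod isCompact_univ).uniformContinuousOn_of_continuous hcont.continuousOn) ε hε
  refine ⟨δ, hδ, fun a b hab u hu => ?_⟩
  have hmem : ∀ c : M, ((u, c) : ℝ × M) ∈ Icc (-T) T ×ˢ univ :=
    fun _ => ⟨abs_le.mp hu, trivial⟩
  exact H _ (hmem a) _ (hmem b) (by simpa [Prod.dist_eq] using hab)

theorem exists_bowenDist_lt_of_bowenDist_core_lt [CompactSpace M]
    (hcont : Continuous fun q : ℝ × M => φ q.1 q.2) (hadd : ∀ u v x, φ (u + v) x = φ u (φ v x))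
    (T : ℝ) {ε : ℝ} (hε : 0 < ε) :
    ∃ δ ∈ Ioc 0 ε, ∀ {w x : M} {p g s : ℝ}, p ∈ Icc 0 T → 0 ≤ g → s ∈ Icc 0 T →
      bowenDist φ g (φ p w) (φ p x) < δ → bowenDist φ (p + g + s) w x < ε := by
  obtain ⟨δ, hδ, hflow⟩ := exists_dist_flow_lt hcont T (half_pos hε)
  refine ⟨min δ ε, ⟨lt_min hδ hε, min_le_right _ _⟩, fun {w x p g s} hp hg hs hcore => ?_⟩
  refine (bowenDist_le (half_pos hε).le fun v hv => ?_).trans_lt (half_lt_self hε)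
  -- Follow the shadowing along the core up to the time `c` closest to `v - p`, then flow for
  -- the remaining time `v - p - c`, which is at most `T` in absolute value.
  set c := max 0 (min (v - p) g)
  have hc : c ∈ Icc 0 g := ⟨le_max_left _ _, max_le hg (min_le_right _ _)⟩
  have hvc : |v - p - c| ≤ T := by
    rw [abs_le]
    constructor <;> rcases max_cases 0 (min (v - p) g) with ⟨h1, _⟩ | ⟨h1, _⟩ <;>
      rcases min_cases (v - p) g with ⟨h2, _⟩ | ⟨h2, _⟩ <;>
      linarith [hv.1, hv.2, hp.1, hp.2, hs.1, hs.2]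
  have hsplit : ∀ y : M, φ v y = φ (v - p - c) (φ c (φ p y)) := fun y => by
    rw [← hadd, ← hadd]; congr 1; ring
  rw [hsplit w, hsplit x]
  exact (hflow _ _ ((dist_le_bowenDist hcont hc _ _).trans_lt (hcore.trans_le (min_le_left _ _)))
    _ hvc).le

end Flow

section WeakSpec

variable {M : Type*} [MetricSpace M] {φ : ℝ → M → M}

/-- `S i` is the time at which `y` starts following the `i`-th segment. -/
def Shadows (φ : ℝ → M → M) (δ a b : ℝ) (k : ℕ) (xs : ℕ → M) (ts : ℕ → ℝ) (y : M)
    (S : ℕ → ℝ) : Prop :=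
  (∀ i, i + 1 < k → S (i + 1) - (S i + ts i) ∈ Icc a b) ∧
    ∀ i < k, bowenDist φ (ts i) (φ (S i) y) (xs i) < δ

theorem HasWeakSpec.mono {G G' : Set (M × ℝ)} {δ δ' τ : ℝ} (h : HasWeakSpec φ G δ τ)
    (hG : G' ⊆ G) (hδ : δ ≤ δ') : HasWeakSpec φ G' δ' τ := fun k xs ts hmem => by
  obtain ⟨y, gap, hgap, hgap0, hsh⟩ := h k xs ts fun i => hG (hmem i)
  exact ⟨y, gap, hgap, hgap0, fun j => (hsh j).trans_le hδ⟩

theorem HasWeakSpec.exists_shadows {G : Set (M × ℝ)} {δ τ : ℝ} (h : HasWeakSpec φ G δ τ)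
    {k : ℕ} {xs : ℕ → M} {ts : ℕ → ℝ} (hmem : ∀ i < k, (xs i, ts i) ∈ G) :
    ∃ y S, Shadows φ δ 0 τ k xs ts y S := by
  obtain ⟨y, gap, hgap, -, hsh⟩ := h k (fun i => xs i) (fun i => ts i) fun i => hmem i i.2
  set gap' : ℕ → ℝ := fun i => if hi : i < k then gap ⟨i, hi⟩ else 0
  have hgap' : ∀ i : Fin k, gap' i = gap i := fun i => dif_pos i.2
  refine ⟨y, fun i => ∑ r ∈ Finset.range i, ts r + ∑ r ∈ Finset.range (i + 1), gap' r,
    fun i hi => ?_, fun i hi => ?_⟩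
  · have : gap' (i + 1) = gap ⟨i + 1, hi⟩ := dif_pos hi
    simp only [Finset.sum_range_succ _ i, Finset.sum_range_succ _ (i + 1), this]
    convert hgap ⟨i + 1, hi⟩ using 1
    ring
  · have := hsh ⟨i, hi⟩
    simp only [← hgap', Fin.sum_Iio_eq_sum_range ts, Fin.sum_Iic_eq_sum_range gap'] at this
    exact this

theorem hasWeakSpec_of_exists_shadows [Nonempty M] (hadd : ∀ u v x, φ (u + v) x = φ u (φ v x))
    {G : Set (M × ℝ)} {δ τ : ℝ} (hτ : 0 ≤ τ)
    (h : ∀ k (xs : ℕ → M) (ts : ℕ → ℝ), (∀ i < k, (xs i, ts i) ∈ G) →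
      ∃ y S, Shadows φ δ 0 τ k xs ts y S) :
    HasWeakSpec φ G δ τ := by
  intro k xs ts hmem
  set xs' : ℕ → M := fun i => if hi : i < k then xs ⟨i, hi⟩ else Classical.arbitrary M
  set ts' : ℕ → ℝ := fun i => if hi : i < k then ts ⟨i, hi⟩ else 0
  have hxs' : ∀ i : Fin k, xs' i = xs i := fun i => dif_pos i.2
  have hts' : ∀ i : Fin k, ts' i = ts i := fun i => dif_pos i.2
  obtain ⟨y, S, hgap, hsh⟩ := h k xs' ts' fun i hi => by
    simpa only [xs', ts', dif_pos hi] using hmem ⟨i, hi⟩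
  set gap : ℕ → ℝ := fun i => if i = 0 then 0 else S i - (S (i - 1) + ts' (i - 1))
  have htele : ∀ j,
      ∑ r ∈ Finset.range j, ts' r + ∑ r ∈ Finset.range (j + 1), gap r = S j - S 0 := by
    intro j
    induction j with
    | zero => simp [gap]
    | succ j ih =>
      rw [Finset.sum_range_succ, Finset.sum_range_succ _ (j + 1)]
      simp only [gap, if_neg (Nat.succ_ne_zero j), Nat.add_sub_cancel] at ih ⊢
      linarith
  refine ⟨φ (S 0) y, fun i => gap i, fun i => ?_, fun i hi => if_pos hi, fun j => ?_⟩
  · by_cases hi : i.1 = 0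
    · simp [gap, hi, hτ]
    · obtain ⟨r, hr⟩ := Nat.exists_eq_add_one_of_ne_zero hi
      simpa only [gap, hr, if_neg r.succ_ne_zero, Nat.add_sub_cancel] using hgap r (hr ▸ i.2)
  · rw [← hxs', ← hts', Fin.sum_Iic_eq_sum_range gap, ← hadd]
    simp only [← hts', Fin.sum_Iio_eq_sum_range ts', htele, sub_add_cancel]
    exact hsh j j.2

/-- Padding with `n` copies of a fixed segment `(z, L)` between consecutive segments forces the
gaps to be at least `n * L`. -/
theorem HasWeakSpec.exists_shadows_padded {G : Set (M × ℝ)} {δ τ : ℝ}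
    (h : HasWeakSpec φ G δ τ) {z : M} {L : ℝ} (hz : (z, L) ∈ G) (n : ℕ) {k : ℕ} {xs : ℕ → M}
    {ts : ℕ → ℝ} (hmem : ∀ i < k, (xs i, ts i) ∈ G) :
    ∃ y S, Shadows φ δ (n * L) (n * L + (n + 1) * τ) k xs ts y S := by
  set xs' : ℕ → M := fun m => if m % (n + 1) = 0 then xs (m / (n + 1)) else z
  set ts' : ℕ → ℝ := fun m => if m % (n + 1) = 0 then ts (m / (n + 1)) else L
  have hxs' : ∀ i, xs' (i * (n + 1)) = xs i := fun i => by simp [xs']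
  have hts' : ∀ i, ts' (i * (n + 1)) = ts i := fun i => by simp [ts']
  have hpad : ∀ i, ∀ r < n, ts' (i * (n + 1) + (r + 1)) = L := fun i r hr => by
    simp [ts', Nat.mul_comm i, Nat.mod_eq_of_lt (Nat.succ_lt_succ hr)]
  obtain ⟨y, S, hgap, hsh⟩ := h.exists_shadows (k := k * (n + 1)) (xs := xs') (ts := ts')
    fun m hm => by
      by_cases hmod : m % (n + 1) = 0
      · simpa only [xs', ts', if_pos hmod] using
          hmem _ (Nat.div_lt_of_lt_mul (by rwa [Nat.mul_comm]))
      · simpa only [xs', ts', if_neg hmod] using hz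
  refine ⟨y, fun i => S (i * (n + 1)), fun i hi => ?_, fun i hi => ?_⟩
  · have hblock := sub_sum_range_mem_Icc S ts' (i * (n + 1)) (n + 1) fun r hr =>
      hgap _ (by nlinarith)
    rw [Finset.sum_range_succ', Finset.sum_congr rfl fun r hr => hpad i r (Finset.mem_range.mp hr),
      add_zero, hts', Finset.sum_const, Finset.card_range, nsmul_eq_mul] at hblock
    show S ((i + 1) * (n + 1)) - (S (i * (n + 1)) + ts i) ∈ _
    rw [show (i + 1) * (n + 1) = i * (n + 1) + (n + 1) by ring]
    push_cast at hblock
    constructor <;> linarith [hblock.1, hblock.2]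
  · simpa only [hxs', hts'] using hsh _ (Nat.mul_lt_mul_of_pos_right hi (Nat.succ_pos n))

end WeakSpec

section Decomposition

variable {M : Type*} {φ : ℝ → M → M} {D PP GG SS : Set (M × ℝ)}
  {p g s : M → ℝ → ℝ}

theorem IsDecomposition.core_mem_tail (hdec : IsDecomposition φ D PP GG SS p g s)
    {M' T : ℝ} {x : M} {t : ℝ} (h : (x, t) ∈ GM D p s M' ∩ {xt | T + 2 * M' ≤ xt.2}) :
    (φ (p x t) x, g x t) ∈ GG ∩ {xt | T ≤ xt.2} := by
  obtain ⟨⟨hD, hp, hs⟩, ht⟩ := h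
  obtain ⟨-, -, -, hsum, -, hcore, -⟩ := hdec hD
  exact ⟨hcore, show T ≤ g x t by linarith [show T + 2 * M' ≤ t from ht]⟩

theorem HasWeakSpec.hasWeakSpec_GM [MetricSpace M] (hadd : ∀ u v x, φ (u + v) x = φ u (φ v x))
    (hdec : IsDecomposition φ D PP GG SS p g s) {M' T δ₁ δ τ : ℝ} (hM' : 0 ≤ M')
    (hcore : ∀ {w x : M} {p g s : ℝ}, p ∈ Icc 0 M' → 0 ≤ g → s ∈ Icc 0 M' →
      bowenDist φ g (φ p w) (φ p x) < δ₁ → bowenDist φ (p + g + s) w x < δ)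
    (h : HasWeakSpec φ (GG ∩ {xt | T ≤ xt.2}) δ₁ τ) (hτ : 0 ≤ τ) {z : M} {L : ℝ}
    (hz : (z, L) ∈ GG ∩ {xt | T ≤ xt.2}) {n : ℕ} (hn : 2 * M' ≤ n * L) :
    HasWeakSpec φ (GM D p s M' ∩ {xt | T + 2 * M' ≤ xt.2}) δ (n * L + (n + 1) * τ) := by
  have : Nonempty M := ⟨z⟩
  refine hasWeakSpec_of_exists_shadows hadd (add_nonneg (by linarith)
    (mul_nonneg n.cast_add_one_pos.le hτ)) fun k xs ts hmem => ?_
  have hparts : ∀ i < k, p (xs i) (ts i) ∈ Icc 0 M' ∧ 0 ≤ g (xs i) (ts i) ∧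
      s (xs i) (ts i) ∈ Icc 0 M' ∧ p (xs i) (ts i) + g (xs i) (ts i) + s (xs i) (ts i) = ts i :=
    fun i hi => by
      obtain ⟨⟨hD, hpM, hsM⟩, -⟩ := hmem i hi
      obtain ⟨hp, hg, hs, hsum, -⟩ := hdec hD
      exact ⟨⟨hp, hpM.le⟩, hg, ⟨hs, hsM.le⟩, hsum⟩
  obtain ⟨Y, S, hgap, hsh⟩ := h.exists_shadows_padded hz n
    (xs := fun i => φ (p (xs i) (ts i)) (xs i)) (ts := fun i => g (xs i) (ts i))
    fun i hi => hdec.core_mem_tail (hmem i hi)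
  refine ⟨Y, fun i => S i - p (xs i) (ts i), fun i hi => ?_, fun i hi => ?_⟩
  · obtain ⟨-, -, ⟨hs0, hsM⟩, hsum⟩ := hparts i (by omega)
    obtain ⟨⟨hp0, hpM⟩, -⟩ := hparts (i + 1) hi
    have hcoregap := hgap i hi
    constructor <;> linarith [hcoregap.1, hcoregap.2]
  · obtain ⟨hp, hg, hs, hsum⟩ := hparts i hi
    rw [← hsum]
    refine hcore hp hg hs ?_
    simpa only [← hadd, add_sub_cancel] using hsh i hi

end Decomposition

theorem GM_tail_spec_of_tail_spec_all_scales_general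
    {M : Type*} [MetricSpace M] [CompactSpace M]
    (φ : ℝ → M → M)
    (hcont : Continuous fun q : ℝ × M => φ q.1 q.2)
    (hadd : ∀ u v x, φ (u + v) x = φ u (φ v x))
    (D PP GG SS : Set (M × ℝ))
    (p g s : M → ℝ → ℝ)
    (hdec : IsDecomposition φ D PP GG SS p g s)
    (hspec : ∀ δ : ℝ, 0 < δ → HasTailWeakSpec φ GG δ) :
    ∀ M' : ℝ, 0 < M' → ∀ δ : ℝ, 0 < δ → HasTailWeakSpec φ (GM D p s M') δ := by
  intro M' hM' δ hδ
  obtain ⟨δ₁, ⟨hδ₁, hδ₁δ⟩, hcore⟩ := exists_bowenDist_lt_of_bowenDist_core_lt hcont hadd M' hδ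
  obtain ⟨T, hT, τ, hτ, hspecT⟩ := hspec δ₁ hδ₁
  refine ⟨T + 2 * M', by linarith, ?_⟩
  by_cases hne : (GG ∩ {xt | T ≤ xt.2}).Nonempty
  · obtain ⟨⟨z, L⟩, hz⟩ := hne
    obtain ⟨n, hn⟩ := Archimedean.arch (2 * M') (hT.trans_le hz.2)
    rw [nsmul_eq_mul] at hn
    exact ⟨_, add_nonneg (by linarith) (mul_nonneg n.cast_add_one_pos.le hτ),
      hspecT.hasWeakSpec_GM hadd hdec hM'.le hcore hτ hz hn⟩
  · -- An empty tail of `G` forces an empty tail of `G^{M'}`.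
    exact ⟨τ, hτ, hspecT.mono (fun _ hxt => absurd ⟨_, hdec.core_mem_tail hxt⟩ hne) hδ₁δ⟩

/-- If G has tail weak specification at every scale δ > 0, then so does
G^{M'} for every M' > 0. -/
theorem GM_tail_spec_of_tail_spec_all_scales
    {M : Type*} [MetricSpace M] [CompactSpace M]
    (φ : ℝ → M → M)
    (hcont : Continuous fun q : ℝ × M => φ q.1 q.2)
    (hid : ∀ x, φ 0 x = x)
    (hadd : ∀ u v x, φ (u + v) x = φ u (φ v x))
    (D PP GG SS : Set (M × ℝ)) (hD : D ⊆ {xt : M × ℝ | 0 ≤ xt.2})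
    (p g s : M → ℝ → ℝ)
    (hdec : IsDecomposition φ D PP GG SS p g s)
    (hspec : ∀ δ : ℝ, 0 < δ → HasTailWeakSpec φ GG δ) :
    ∀ M' : ℝ, 0 < M' → ∀ δ : ℝ, 0 < δ → HasTailWeakSpec φ (GM D p s M') δ :=
  GM_tail_spec_of_tail_spec_all_scales_general φ hcont hadd D PP GG SS p g s hdec hspec
end

section
/- Let (φ_t) be a Lipschitz continuous flow on a compact metric space M with L_X = max_{t∈[0,1]} Lip(φ_t) ≥ 1, φ: M → ℝ a continuous potential, δ > 0 and ε = 1000·L_X·δ. Suppose G ⊂ M×ℝ⁺ has weak specification at scale δ for all orbit segments of length > T_0 with maximum gap size τ, and φ has the Bowen property at scale ε on G. Then for every γ ∈ I_δ = [4·L_X·δ, 100·L_X·δ] there is a constant C_1 > 0 such that for every k ∈ ℕ, all t_1,…,t_k ≥ T_0, setting T = Σ_{i=1}^k t_i + (k−1)τ, and every 0 < θ < γ/2 − δ, one has ∏_{j=1}^k Λ(G, γ, 0, t_j) ≤ C_1^k · Λ(M×ℝ⁺, θ, 0, T). -/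
open MeasureTheory Filter Set

/-!
Take `(t_j, γ)`-separated sets `E_j ⊆ G_{t_j}`. Weak specification glues every tuple
`(x_1, …, x_k) ∈ ∏ E_j` into one orbit segment `(y, T)`; the Bowen property (constant `K`) on the
segments and the bound `|pot| ≤ P` on the gaps give `∑ Φ_0(x_j, t_j) ≤ Φ_0(y, T) + k (K + τ P)`.

Distinct tuples need not give `(T, θ)`-separated points, because the gaps vary. Choose `η ≤ 1`
with `d(φ_Δ z, z) ≤ δ/2` for `Δ ∈ [0, η]` and sort the tuples by the cumulative gaps rounded down
to multiples of `η`. If two tuples in a class differ at `x_j ≠ x'_j`, their orbits shadow the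
`j`-th segments from start times less than `η` apart; comparing them at the later start time shows
that they are `(T, γ - 2 L δ - δ)`-separated, and `γ - 2 L δ - δ ≥ γ/2 - δ > θ`. Each class thus
contributes at most `e^{k (K + τ P)} Λ(M × ℝ⁺, θ, 0, T)`. Recording the rounded cumulative gaps
by their increments, which lie in `{0, …, ⌊τ/η⌋ + 1}`, shows there are at most `(⌊τ/η⌋ + 2)^k`
classes.
-/

lemma sum_integral_le_integral_add {ι : Type*} [Fintype ι] [LinearOrder ι] {f : ℝ → ℝ}
    (hf : Continuous f) {P T : ℝ} (hP : ∀ x, |f x| ≤ P) (hT : 0 ≤ T) {a t : ι → ℝ}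
    (ha : ∀ i, 0 ≤ a i) (ht : ∀ i, 0 ≤ t i) (haT : ∀ i, a i + t i ≤ T)
    (hlt : ∀ i j, i < j → a i + t i ≤ a j) :
    ∑ i, ∫ x in a i..a i + t i, f x ≤ (∫ x in 0..T, f x) + P * (T - ∑ i, t i) := by
  -- compare the integrals of the nonnegative function `f + P`
  set g : ℝ → ℝ := fun x => f x + P
  have hg : Continuous g := hf.add continuous_const
  have hg0 : ∀ x, 0 ≤ g x := fun x => by linarith [neg_abs_le (f x), hP x]
  have hint (u v : ℝ) : ∫ x in u..v, g x = (∫ x in u..v, f x) + (v - u) * P := by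
    rw [intervalIntegral.integral_add (hf.intervalIntegrable u v) intervalIntegrable_const,
      intervalIntegral.integral_const, smul_eq_mul]
  have hunion : ∑ i, ∫ x in a i..a i + t i, g x ≤ ∫ x in 0..T, g x := by
    simp_rw [intervalIntegral.integral_of_le (le_add_of_nonneg_right (ht _)),
      intervalIntegral.integral_of_le hT]
    rw [← integral_iUnion_fintype (fun i => measurableSet_Ioc)
      ((pairwise_disjoint_on _).2 fun i j hij => Set.Ioc_disjoint_Ioc.2
        ((min_le_left _ _).trans ((hlt i j hij).trans (le_max_right _ _))))
      fun i => hg.integrableOn_Ioc]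
    exact setIntegral_mono_set hg.integrableOn_Ioc (Eventually.of_forall hg0)
      (iUnion_subset fun i => Ioc_subset_Ioc (ha i) (haT i)).eventuallyLE
  simp only [hint, add_sub_cancel_left, sub_zero, Finset.sum_add_distrib, ← Finset.sum_mul]
    at hunion
  linarith

lemma sSup_mul_le {S : Set ℝ} {d B : ℝ} (hd : 0 ≤ d) (hB : 0 ≤ B) (h : ∀ x ∈ S, x * d ≤ B) :
    sSup S * d ≤ B := by
  rw [mul_comm, ← smul_eq_mul, ← Real.sSup_smul_of_nonneg hd]
  refine Real.sSup_le ?_ hB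
  rintro _ ⟨x, hx, rfl⟩
  simpa only [smul_eq_mul, mul_comm] using h x hx

lemma prod_sSup_mul_le {ι : Type*} [DecidableEq ι] (s : Finset ι) {S : ι → Set ℝ}
    (hS : ∀ j ∈ s, ∀ x ∈ S j, 0 ≤ x) {B : ℝ} (hB : 0 ≤ B) {c : ℝ} (hc : 0 ≤ c)
    (h : ∀ r : ι → ℝ, (∀ j ∈ s, r j ∈ S j) → (∏ j ∈ s, r j) * c ≤ B) :
    (∏ j ∈ s, sSup (S j)) * c ≤ B := by
  induction s using Finset.induction_on generalizing c with
  | empty => simpa using h 0 (by simp)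
  | insert a s ha ih =>
    have hS' : ∀ j ∈ s, ∀ x ∈ S j, 0 ≤ x := fun j hj => hS j (Finset.mem_insert_of_mem hj)
    rw [Finset.prod_insert ha, mul_assoc]
    refine sSup_mul_le (mul_nonneg (Finset.prod_nonneg fun j hj => Real.sSup_nonneg (hS' j hj)) hc)
      hB fun x hx => ?_
    have hx0 : 0 ≤ x := hS a (Finset.mem_insert_self a s) x hx
    calc x * ((∏ j ∈ s, sSup (S j)) * c) = (∏ j ∈ s, sSup (S j)) * (x * c) := by ring
      _ ≤ B := ih hS' (mul_nonneg hx0 hc) fun r hr => by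
        have := h (Function.update r a x) fun j hj => by
          rcases Finset.mem_insert.1 hj with rfl | hj
          · simpa using hx
          · rw [Function.update_of_ne (ne_of_mem_of_not_mem hj ha)]
            exact hr j hj
        rwa [Finset.prod_insert ha, Function.update_self, Finset.prod_update_of_notMem ha,
          mul_comm x, mul_assoc] at this

lemma prod_sSup_le {ι : Type*} [DecidableEq ι] (s : Finset ι) {S : ι → Set ℝ}
    (hS : ∀ j ∈ s, ∀ x ∈ S j, 0 ≤ x) {B : ℝ} (hB : 0 ≤ B)
    (h : ∀ r : ι → ℝ, (∀ j ∈ s, r j ∈ S j) → ∏ j ∈ s, r j ≤ B) :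
    ∏ j ∈ s, sSup (S j) ≤ B := by
  simpa using prod_sSup_mul_le s hS hB zero_le_one fun r hr => by simpa using h r hr

lemma continuous_orbit {M : Type*} [TopologicalSpace M] {φ : ℝ → M → M}
    (hcont : Continuous fun q : ℝ × M => φ q.1 q.2) (x : M) : Continuous fun s => φ s x :=
  hcont.comp (continuous_id.prodMk continuous_const)

section Bowen

variable {M : Type*} [MetricSpace M] {φ : ℝ → M → M}

lemma bowenDist_comm (t : ℝ) (x y : M) : bowenDist φ t x y = bowenDist φ t y x := by
  simp only [bowenDist, dist_comm]

lemma bowenDist_self (t : ℝ) (x : M) : bowenDist φ t x x = 0 := by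
  simp only [bowenDist, dist_self]
  rcases (Icc 0 t).eq_empty_or_nonempty with h | h
  · simp [h]
  · simp [h.image_const]

lemma exists_lt_dist_of_lt_bowenDist {t γ : ℝ} (ht : 0 ≤ t) {x y : M}
    (h : γ < bowenDist φ t x y) : ∃ s ∈ Icc 0 t, γ < dist (φ s x) (φ s y) := by
  obtain ⟨_, ⟨s, hs, rfl⟩, hlt⟩ := exists_lt_of_lt_csSup ((nonempty_Icc.2 ht).image _) h
  exact ⟨s, hs, hlt⟩

variable (hcont : Continuous fun q : ℝ × M => φ q.1 q.2)
include hcont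

lemma dist_le_bowenDist_s6 {t s : ℝ} (hs : s ∈ Icc 0 t) (x y : M) :
    dist (φ s x) (φ s y) ≤ bowenDist φ t x y :=
  le_csSup (isCompact_Icc.image
    ((continuous_orbit hcont x).dist (continuous_orbit hcont y))).bddAbove (mem_image_of_mem _ hs)

variable [CompactSpace M]

lemma exists_pos_dist_flow_le (hid : ∀ x, φ 0 x = x) {c : ℝ} (hc : 0 < c) :
    ∃ η > 0, η ≤ 1 ∧ ∀ z, ∀ Δ ∈ Icc 0 η, dist (φ Δ z) z ≤ c := by
  obtain ⟨η, hη, h⟩ := Metric.uniformContinuousOn_iff.1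
    ((isCompact_Icc.prod isCompact_univ).uniformContinuousOn_of_continuous hcont.continuousOn) c hc
  refine ⟨min (η / 2) 1, by positivity, min_le_right _ _, fun z Δ hΔ => ?_⟩
  have hΔη : Δ < η := by linarith [hΔ.2.trans (min_le_left _ _)]
  have := h (Δ, z) ⟨⟨hΔ.1, hΔ.2.trans (min_le_right _ _)⟩, trivial⟩ (0, z)
    ⟨left_mem_Icc.2 zero_le_one, trivial⟩
    (by simpa [Prod.dist_eq, abs_of_nonneg hΔ.1, hη] using hΔη)
  rw [hid] at this
  exact this.le

lemma exists_pos_bowenDist_le (t : ℝ) {θ : ℝ} (hθ : 0 < θ) :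
    ∃ η > 0, ∀ x y : M, dist x y < η → bowenDist φ t x y ≤ θ := by
  obtain ⟨η, hη, h⟩ := Metric.uniformContinuousOn_iff.1
    ((isCompact_Icc.prod isCompact_univ).uniformContinuousOn_of_continuous hcont.continuousOn) θ hθ
  refine ⟨η, hη, fun x y hxy => Real.sSup_le ?_ hθ.le⟩
  rintro _ ⟨s, hs, rfl⟩
  exact (h (s, x) ⟨hs, trivial⟩ (s, y) ⟨hs, trivial⟩ (by simpa [Prod.dist_eq, hη] using hxy)).le

lemma exists_card_le_of_isSeparatedSet (t : ℝ) {θ : ℝ} (hθ : 0 < θ) :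
    ∃ N : ℕ, ∀ E : Finset M, IsSeparatedSet φ t θ E → E.card ≤ N := by
  obtain ⟨η, hη, hclose⟩ := exists_pos_bowenDist_le hcont t hθ
  obtain ⟨C, -, hC, hcover⟩ := finite_cover_balls_of_compact (isCompact_univ (X := M)) (half_pos hη)
  have hcenter (x : M) : ∃ c ∈ hC.toFinset, x ∈ Metric.ball c (η / 2) := by
    simpa using hcover (mem_univ x)
  choose center hcenter_mem hcenter_ball using hcenter
  refine ⟨hC.toFinset.card, fun E hE => Finset.card_le_card_of_injOn center
    (fun x _ => hcenter_mem x) fun x hx y hy hxy => ?_⟩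
  by_contra hne
  have hdist : dist x y < η := by
    have hx := Metric.mem_ball.1 (hcenter_ball x)
    have hy := Metric.mem_ball'.1 (hcenter_ball y)
    rw [← hxy] at hy
    linarith [dist_triangle x (center x) y]
  exact (hE hx hy hne).not_ge (hclose x y hdist)

end Bowen

section Birkhoff

variable {M : Type*} {φ : ℝ → M → M} {pot : M → ℝ}

lemma exists_nonneg_abs_le_of_continuous [TopologicalSpace M] [CompactSpace M]
    (hpot : Continuous pot) : ∃ P ≥ 0, ∀ x, |pot x| ≤ P := by
  obtain ⟨P, hP⟩ := isCompact_univ.exists_bound_of_continuousOn hpot.continuousOn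
  exact ⟨max P 0, le_max_right _ _, fun x => (hP x trivial).trans (le_max_left _ _)⟩

lemma birkhoff_le {P : ℝ} (hP : ∀ x, |pot x| ≤ P) (x : M) (t : ℝ) :
    birkhoff φ pot x t ≤ P * |t| := by
  have h := intervalIntegral.norm_integral_le_of_norm_le_const (a := 0) (b := t)
    (f := fun s => pot (φ s x)) fun s _ => hP (φ s x)
  rw [sub_zero] at h
  exact (le_abs_self _).trans h

lemma birkhoff_flow (hadd : ∀ u v x, φ (u + v) x = φ u (φ v x)) (a t : ℝ) (y : M) :
    birkhoff φ pot (φ a y) t = ∫ s in a..a + t, pot (φ s y) := by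
  simp_rw [birkhoff, ← hadd]
  rw [intervalIntegral.integral_comp_add_right (fun s => pot (φ s y)), zero_add, add_comm]

lemma sum_birkhoff_flow_le [TopologicalSpace M] (hcont : Continuous fun q : ℝ × M => φ q.1 q.2)
    (hpot : Continuous pot) (hadd : ∀ u v x, φ (u + v) x = φ u (φ v x)) {P T : ℝ}
    (hP : ∀ x, |pot x| ≤ P) (hT : 0 ≤ T)
    {ι : Type*} [Fintype ι] [LinearOrder ι] {a t : ι → ℝ} (ha : ∀ i, 0 ≤ a i)
    (ht : ∀ i, 0 ≤ t i) (haT : ∀ i, a i + t i ≤ T) (hlt : ∀ i j, i < j → a i + t i ≤ a j)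
    (y : M) :
    ∑ i, birkhoff φ pot (φ (a i) y) (t i) ≤ birkhoff φ pot y T + P * (T - ∑ i, t i) := by
  simp_rw [birkhoff_flow hadd]
  exact sum_integral_le_integral_add (hpot.comp (continuous_orbit hcont y)) (fun s => hP _) hT
    ha ht haT hlt

end Birkhoff

section PartitionFunction

variable {M : Type*} [MetricSpace M] {φ : ℝ → M → M} {pot : M → ℝ}

lemma PhiSup_zero (x : M) (t : ℝ) : PhiSup φ pot 0 x t = birkhoff φ pot x t := if_pos rfl

lemma partFn_nonneg (C : Set (M × ℝ)) (θ t : ℝ) : 0 ≤ partFn φ pot C θ 0 t :=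
  Real.sSup_nonneg fun _ ⟨_, _, _, hr⟩ => hr ▸ Finset.sum_nonneg fun _ _ => (Real.exp_pos _).le

variable [CompactSpace M] (hcont : Continuous fun q : ℝ × M => φ q.1 q.2) (hpot : Continuous pot)
include hcont hpot

lemma bddAbove_partFn_set (C : Set (M × ℝ)) {θ : ℝ} (hθ : 0 < θ) (t : ℝ) :
    BddAbove {r : ℝ | ∃ E : Finset M, (↑E : Set M) ⊆ {x | (x, t) ∈ C} ∧
      IsSeparatedSet φ t θ (↑E : Set M) ∧ r = ∑ x ∈ E, Real.exp (PhiSup φ pot 0 x t)} := by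
  obtain ⟨N, hN⟩ := exists_card_le_of_isSeparatedSet hcont t hθ
  obtain ⟨P, -, hP⟩ := exists_nonneg_abs_le_of_continuous hpot
  refine ⟨N * Real.exp (P * |t|), ?_⟩
  rintro _ ⟨E, -, hE, rfl⟩
  calc ∑ x ∈ E, Real.exp (PhiSup φ pot 0 x t)
      ≤ ∑ _x ∈ E, Real.exp (P * |t|) := Finset.sum_le_sum fun x _ => by
        rw [PhiSup_zero, Real.exp_le_exp]; exact birkhoff_le hP x t
    _ ≤ N * Real.exp (P * |t|) := by
        rw [Finset.sum_const, nsmul_eq_mul]; gcongr; exact_mod_cast hN E hE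

lemma sum_exp_birkhoff_le_partFn {C : Set (M × ℝ)} {θ t : ℝ} (hθ : 0 < θ) {E : Finset M}
    (hEC : (↑E : Set M) ⊆ {x | (x, t) ∈ C}) (hE : IsSeparatedSet φ t θ (↑E : Set M)) :
    ∑ x ∈ E, Real.exp (birkhoff φ pot x t) ≤ partFn φ pot C θ 0 t :=
  le_csSup (bddAbove_partFn_set hcont hpot C hθ t) ⟨E, hEC, hE, by simp only [PhiSup_zero]⟩

lemma sum_le_card_image_mul_partFn {α β : Type*} [Fintype α] [DecidableEq β] {θ T c : ℝ}
    (hθ : 0 < θ) (hc : 0 ≤ c) (w : α → ℝ) (κ : α → β) (y : α → M)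
    (hsep : ∀ f f', κ f = κ f' → f ≠ f' → θ < bowenDist φ T (y f) (y f'))
    (hw : ∀ f, w f ≤ c * Real.exp (birkhoff φ pot (y f) T)) :
    ∑ f, w f ≤ (Finset.univ.image κ).card * (c * partFn φ pot univ θ 0 T) := by
  classical
  rw [← Finset.sum_fiberwise_of_maps_to (g := κ) fun f _ => Finset.mem_image_of_mem κ
    (Finset.mem_univ f), ← nsmul_eq_mul, ← Finset.sum_const]
  refine Finset.sum_le_sum fun v _ => ?_
  set F := Finset.univ.filter fun f => κ f = v
  have hsepF : ∀ f ∈ F, ∀ f' ∈ F, f ≠ f' → θ < bowenDist φ T (y f) (y f') :=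
    fun f hf f' hf' => hsep f f' ((Finset.mem_filter.1 hf).2.trans (Finset.mem_filter.1 hf').2.symm)
  have hinj : Set.InjOn y F := fun f hf f' hf' hyy => by
    by_contra hne
    have := hsepF f hf f' hf' hne
    rw [hyy, bowenDist_self] at this
    exact hθ.not_gt this
  calc ∑ f ∈ F, w f ≤ c * ∑ f ∈ F, Real.exp (birkhoff φ pot (y f) T) := by
        rw [Finset.mul_sum]; exact Finset.sum_le_sum fun f _ => hw f
    _ = c * ∑ x ∈ F.image y, Real.exp (birkhoff φ pot x T) := by rw [Finset.sum_image hinj]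
    _ ≤ c * partFn φ pot univ θ 0 T := by
        gcongr
        refine sum_exp_birkhoff_le_partFn hcont hpot hθ (by simp) ?_
        simp only [Finset.coe_image]
        rintro _ ⟨f, hf, rfl⟩ _ ⟨f', hf', rfl⟩ hne
        exact hsepF f hf f' hf' fun h => hne (h ▸ rfl)

end PartitionFunction

section Gaps

variable {k : ℕ}

noncomputable def gapCode (η : ℝ) (g : Fin k → ℝ) (j : Fin k) : ℤ :=
  ⌊(∑ i ∈ Finset.Iic j, g i) / η⌋ - ⌊(∑ i ∈ Finset.Iio j, g i) / η⌋

lemma gapCode_mem_Icc {η τ : ℝ} (hη : 0 < η) {g : Fin k → ℝ} (hg : ∀ i, g i ∈ Icc 0 τ)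
    (j : Fin k) : gapCode η g j ∈ Finset.Icc 0 (⌊τ / η⌋ + 1) := by
  rw [Finset.mem_Icc, gapCode, Finset.Iic_eq_cons_Iio, Finset.sum_cons, add_div]
  set u := (∑ i ∈ Finset.Iio j, g i) / η
  have hv0 : 0 ≤ g j / η := div_nonneg (hg j).1 hη.le
  have hvτ : g j / η ≤ τ / η := div_le_div_of_nonneg_right (hg j).2 hη.le
  have hlow : ⌊u⌋ ≤ ⌊g j / η + u⌋ := Int.floor_mono (le_add_of_nonneg_left hv0)
  have hup : ⌊g j / η + u⌋ < ⌊u⌋ + ⌊τ / η⌋ + 2 := Int.floor_lt.2 (by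
    push_cast
    linarith [Int.lt_floor_add_one u, Int.lt_floor_add_one (τ / η)])
  omega

lemma floor_sum_Iic_eq_of_gapCode_eq {η : ℝ} {g g' : Fin k → ℝ}
    (h : gapCode η g = gapCode η g') (j : Fin k) :
    ⌊(∑ i ∈ Finset.Iic j, g i) / η⌋ = ⌊(∑ i ∈ Finset.Iic j, g' i) / η⌋ := by
  induction hn : (j : ℕ) generalizing j with
  | zero =>
    have hIio : Finset.Iio j = ∅ := by ext i; simp [Fin.lt_def, hn]
    simpa [gapCode, hIio] using congrFun h j
  | succ n ih =>
    have hIio : Finset.Iio j = Finset.Iic ⟨n, by omega⟩ := by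
      ext i; simp only [Finset.mem_Iio, Finset.mem_Iic, Fin.lt_def, Fin.le_def]; omega
    have hj := congrFun h j
    rw [gapCode, gapCode, hIio] at hj
    have := ih ⟨n, by omega⟩ rfl
    omega

lemma abs_sum_Iic_sub_lt_of_gapCode_eq {η : ℝ} (hη : 0 < η) {g g' : Fin k → ℝ}
    (h : gapCode η g = gapCode η g') (j : Fin k) :
    |∑ i ∈ Finset.Iic j, g i - ∑ i ∈ Finset.Iic j, g' i| < η := by
  have := Int.abs_sub_lt_one_of_floor_eq_floor (floor_sum_Iic_eq_of_gapCode_eq h j)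
  rwa [← sub_div, abs_div, abs_of_pos hη, div_lt_one hη] at this

lemma card_image_gapCode_le {α : Type*} [Fintype α] {η τ : ℝ} (hη : 0 < η)
    (g : α → Fin k → ℝ) (hg : ∀ f i, g f i ∈ Icc 0 τ) :
    (Finset.univ.image fun f => gapCode η (g f)).card ≤ (⌊τ / η⌋ + 2).toNat ^ k := by
  calc _ ≤ (Fintype.piFinset fun _ : Fin k => Finset.Icc 0 (⌊τ / η⌋ + 1)).card :=
        Finset.card_le_card fun _ hv => by
          obtain ⟨f, -, rfl⟩ := Finset.mem_image.1 hv
          exact Fintype.mem_piFinset.2 (gapCode_mem_Icc hη (hg f))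
    _ = _ := by simp [Int.card_Icc, add_assoc]

end Gaps

lemma sum_le_card_sub_one_mul {ι : Type*} [Fintype ι] [DecidableEq ι] {g : ι → ℝ} {τ : ℝ}
    (hg : ∀ i, g i ≤ τ) {i₀ : ι} (hi₀ : g i₀ = 0) :
    ∑ i, g i ≤ (Fintype.card ι - 1) * τ := by
  rw [← Finset.add_sum_erase _ _ (Finset.mem_univ i₀), hi₀, zero_add]
  calc _ ≤ (Finset.univ.erase i₀).card • τ := Finset.sum_le_card_nsmul _ _ _ fun i _ => hg i
    _ = _ := by
      rw [Finset.card_erase_of_mem (Finset.mem_univ _), Finset.card_univ, nsmul_eq_mul,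
        Nat.cast_pred (Fintype.card_pos_iff.2 ⟨i₀⟩)]

section StartTime

variable {k : ℕ}

/-- The time `s_{j-1} + τ_{j-1}` at which the orbit given by weak specification starts
shadowing the `j`-th segment. -/
def startTime (ts g : Fin k → ℝ) (j : Fin k) : ℝ :=
  (∑ i ∈ Finset.Iio j, ts i) + ∑ i ∈ Finset.Iic j, g i

variable {ts g : Fin k → ℝ} (hts : ∀ i, 0 ≤ ts i)
include hts

lemma startTime_nonneg (hg : ∀ i, 0 ≤ g i) (j : Fin k) : 0 ≤ startTime ts g j :=
  add_nonneg (Finset.sum_nonneg fun i _ => hts i) (Finset.sum_nonneg fun i _ => hg i)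

lemma startTime_add_le_startTime (hg : ∀ i, 0 ≤ g i) {i j : Fin k} (hij : i < j) :
    startTime ts g i + ts i ≤ startTime ts g j := by
  have hts_le : ∑ l ∈ Finset.Iic i, ts l ≤ ∑ l ∈ Finset.Iio j, ts l :=
    Finset.sum_le_sum_of_subset_of_nonneg
      (fun l hl => Finset.mem_Iio.2 ((Finset.mem_Iic.1 hl).trans_lt hij)) fun l _ _ => hts l
  have hg_le : ∑ l ∈ Finset.Iic i, g l ≤ ∑ l ∈ Finset.Iic j, g l :=
    Finset.sum_le_sum_of_subset_of_nonneg (Finset.Iic_subset_Iic.2 hij.le) fun l _ _ => hg l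
  rw [Finset.Iic_eq_cons_Iio, Finset.sum_cons] at hts_le
  rw [startTime, startTime]
  linarith

lemma startTime_add_le {τ : ℝ} (hg : ∀ i, g i ∈ Icc 0 τ) {i₀ : Fin k} (hi₀ : g i₀ = 0)
    (j : Fin k) : startTime ts g j + ts j ≤ (∑ i, ts i) + ((k : ℝ) - 1) * τ := by
  have hts_le : ∑ l ∈ Finset.Iic j, ts l ≤ ∑ l, ts l :=
    Finset.sum_le_univ_sum_of_nonneg fun l => hts l
  have hg_le : ∑ l ∈ Finset.Iic j, g l ≤ ∑ l, g l :=
    Finset.sum_le_univ_sum_of_nonneg fun l => (hg l).1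
  have hg_sum := sum_le_card_sub_one_mul (fun i => (hg i).2) hi₀
  rw [Finset.Iic_eq_cons_Iio, Finset.sum_cons] at hts_le
  rw [Fintype.card_fin] at hg_sum
  rw [startTime]
  linarith

end StartTime

section Shadowing

variable {M : Type*} [MetricSpace M] {φ : ℝ → M → M}
  (hcont : Continuous fun q : ℝ × M => φ q.1 q.2) (hadd : ∀ u v x, φ (u + v) x = φ u (φ v x))
  {L : ℝ} (hL : 0 ≤ L) (hLip : ∀ t ∈ Icc (0:ℝ) 1, LipschitzWith (Real.toNNReal L) (φ t))
  {η c : ℝ} (hη1 : η ≤ 1) (hη : ∀ z, ∀ Δ ∈ Icc 0 η, dist (φ Δ z) z ≤ c)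
include hcont hadd hL hLip hη1 hη

lemma dist_flow_le_of_bowenDist_lt {a Δ s t δ : ℝ} {x y : M} (hΔ : Δ ∈ Icc 0 η)
    (hs : s ∈ Icc 0 t) (hy : bowenDist φ t (φ a y) x < δ) :
    dist (φ (a + Δ + s) y) (φ s x) ≤ L * δ + c := by
  have hsplit : φ (a + Δ + s) y = φ Δ (φ s (φ a y)) := by
    rw [← hadd, ← hadd]; congr 1; ring
  have hLipΔ := (hLip Δ ⟨hΔ.1, hΔ.2.trans hη1⟩).dist_le_mul (φ s (φ a y)) (φ s x)
  rw [Real.coe_toNNReal L hL] at hLipΔ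
  have hshadow := (dist_le_bowenDist_s6 hcont hs (φ a y) x).trans hy.le
  rw [hsplit]
  calc _ ≤ dist (φ Δ (φ s (φ a y))) (φ Δ (φ s x)) + dist (φ Δ (φ s x)) (φ s x) :=
        dist_triangle _ _ _
    _ ≤ L * δ + c :=
        add_le_add (hLipΔ.trans (mul_le_mul_of_nonneg_left hshadow hL)) (hη _ _ hΔ)

/-- Compare the two orbits after the later of the two start times: the earlier one is then
delayed by at most `η`, which moves points by at most `c`. -/
lemma lt_bowenDist_of_shadowing {a a' t T γ δ : ℝ} {x x' y y' : M} (ht : 0 ≤ t)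
    (hx : γ < bowenDist φ t x x') (ha : 0 ≤ a) (haa' : |a - a'| ≤ η) (haT : a + t ≤ T)
    (ha'T : a' + t ≤ T) (hy : bowenDist φ t (φ a y) x < δ)
    (hy' : bowenDist φ t (φ a' y') x' < δ) :
    γ - 2 * (L * δ + c) < bowenDist φ T y y' := by
  obtain ⟨s, hs, hγ⟩ := exists_lt_dist_of_lt_bowenDist ht hx
  obtain ⟨haa'₁, haa'₂⟩ := abs_le.1 haa'
  set m := max a a'
  have hm : m - a ∈ Icc 0 η := ⟨sub_nonneg.2 (le_max_left _ _),
    sub_le_iff_le_add'.2 (max_le (by linarith) (by linarith))⟩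
  have hm' : m - a' ∈ Icc 0 η := ⟨sub_nonneg.2 (le_max_right _ _),
    sub_le_iff_le_add'.2 (max_le (by linarith) (by linarith))⟩
  have h := dist_flow_le_of_bowenDist_lt hcont hadd hL hLip hη1 hη hm hs hy
  have h' := dist_flow_le_of_bowenDist_lt hcont hadd hL hLip hη1 hη hm' hs hy'
  rw [add_sub_cancel] at h h'
  have hmT : m ≤ T - t := max_le (by linarith) (by linarith)
  have hbowen := dist_le_bowenDist_s6 hcont (t := T) (s := m + s)
    ⟨by linarith [le_max_left a a', hs.1], by linarith [hs.2]⟩ y y'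
  linarith [dist_triangle4 (φ s x) (φ (m + s) y) (φ (m + s) y') (φ s x'),
    dist_comm (φ s x) (φ (m + s) y)]

end Shadowing

section Gluing

variable {M : Type*} [MetricSpace M] [CompactSpace M] {φ : ℝ → M → M}
  (hcont : Continuous fun q : ℝ × M => φ q.1 q.2) (hadd : ∀ u v x, φ (u + v) x = φ u (φ v x))
  {L : ℝ} (hL : 0 ≤ L) (hLip : ∀ t ∈ Icc (0:ℝ) 1, LipschitzWith (Real.toNNReal L) (φ t))
  {pot : M → ℝ} (hpot : Continuous pot)
  {η c : ℝ} (hη0 : 0 < η) (hη1 : η ≤ 1) (hη : ∀ z, ∀ Δ ∈ Icc 0 η, dist (φ Δ z) z ≤ c)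
include hcont hadd hL hLip hpot hη0 hη1 hη

theorem sum_exp_sum_birkhoff_le_partFn (GG : Set (M × ℝ)) {δ ε τ T₀ K P γ θ : ℝ}
    (hτ : 0 ≤ τ) (hT₀ : 0 < T₀) (hspec : HasWeakSpec φ (GG ∩ {xt | T₀ ≤ xt.2}) δ τ)
    (hδε : δ ≤ ε) (hK : ∀ ⦃x : M⦄ ⦃t : ℝ⦄, (x, t) ∈ GG → ∀ y ∈ bowenBall φ t ε x,
      |birkhoff φ pot x t - birkhoff φ pot y t| ≤ K)
    (hP0 : 0 ≤ P) (hP : ∀ x, |pot x| ≤ P) (hθ : 0 < θ) (hθγ : θ ≤ γ - 2 * (L * δ + c))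
    {k : ℕ} (hk : 1 ≤ k) {ts : Fin k → ℝ} (hts : ∀ i, T₀ ≤ ts i) (E : Fin k → Finset M)
    (hEG : ∀ j, (↑(E j) : Set M) ⊆ {x | (x, ts j) ∈ GG})
    (hEsep : ∀ j, IsSeparatedSet φ (ts j) γ (↑(E j) : Set M)) :
    ∑ f ∈ Fintype.piFinset E, Real.exp (∑ j, birkhoff φ pot (f j) (ts j)) ≤
      (((⌊τ / η⌋ + 2).toNat : ℝ) * Real.exp (K + τ * P)) ^ k *
        partFn φ pot univ θ 0 ((∑ i, ts i) + ((k : ℝ) - 1) * τ) := by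
  set T := (∑ i, ts i) + ((k : ℝ) - 1) * τ
  have hts0 : ∀ i, 0 ≤ ts i := fun i => hT₀.le.trans (hts i)
  have hk' : (1 : ℝ) ≤ k := by exact_mod_cast hk
  have hT0 : 0 ≤ T := add_nonneg (Finset.sum_nonneg fun i _ => hts0 i)
    (mul_nonneg (by linarith) hτ)
  have hmem (f : Fintype.piFinset E) (j : Fin k) : f.1 j ∈ E j := Fintype.mem_piFinset.1 f.2 j
  have hglue (f : Fintype.piFinset E) : ∃ (y : M) (g : Fin k → ℝ), (∀ i, g i ∈ Icc 0 τ) ∧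
      (∀ i : Fin k, (i : ℕ) = 0 → g i = 0) ∧
      ∀ j, bowenDist φ (ts j) (φ (startTime ts g j) y) (f.1 j) < δ :=
    hspec k f.1 ts fun i => ⟨hEG i (hmem f i), hts i⟩
  choose y g hgτ hg0 hshadow using hglue
  have hg (f) (i) : 0 ≤ g f i := (hgτ f i).1
  have hT (f) : ∀ j, startTime ts (g f) j + ts j ≤ T :=
    startTime_add_le hts0 (hgτ f) (hg0 f ⟨0, hk⟩ rfl)
  have hsep (f f') (hcode : gapCode η (g f) = gapCode η (g f')) (hne : f ≠ f') :
      θ < bowenDist φ T (y f) (y f') := by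
    obtain ⟨j, hj⟩ := Function.ne_iff.1 (Subtype.coe_injective.ne hne)
    have hclose : |startTime ts (g f) j - startTime ts (g f') j| ≤ η := by
      simpa [startTime] using (abs_sum_Iic_sub_lt_of_gapCode_eq hη0 hcode j).le
    exact hθγ.trans_lt (lt_bowenDist_of_shadowing hcont hadd hL hLip hη1 hη (hts0 j)
      (hEsep j (hmem f j) (hmem f' j) hj) (startTime_nonneg hts0 (hg f) j) hclose (hT f j)
      (hT f' j) (hshadow f j) (hshadow f' j))
  have hweight (f) : Real.exp (∑ j, birkhoff φ pot (f.1 j) (ts j)) ≤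
      Real.exp (k * (K + τ * P)) * Real.exp (birkhoff φ pot (y f) T) := by
    rw [← Real.exp_add, Real.exp_le_exp]
    have hbowen (j) : birkhoff φ pot (f.1 j) (ts j) ≤
        birkhoff φ pot (φ (startTime ts (g f) j) (y f)) (ts j) + K := by
      have hball : φ (startTime ts (g f) j) (y f) ∈ bowenBall φ (ts j) ε (f.1 j) := by
        show bowenDist φ (ts j) (f.1 j) _ < ε
        rw [bowenDist_comm]
        exact (hshadow f j).trans_le hδε
      linarith [(abs_le.1 (hK (hEG j (hmem f j)) _ hball)).2]
    have hglued := sum_birkhoff_flow_le hcont hpot hadd hP hT0 (startTime_nonneg hts0 (hg f))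
      hts0 (hT f) (fun i j hij => startTime_add_le_startTime hts0 (hg f) hij) (y f)
    have hgap : P * (T - ∑ i, ts i) ≤ k * (τ * P) := by
      simp only [T, add_sub_cancel_left]
      nlinarith [mul_nonneg hP0 hτ]
    calc ∑ j, birkhoff φ pot (f.1 j) (ts j)
        ≤ ∑ j, (birkhoff φ pot (φ (startTime ts (g f) j) (y f)) (ts j) + K) :=
          Finset.sum_le_sum fun j _ => hbowen j
      _ ≤ _ := by
          rw [Finset.sum_add_distrib, Finset.sum_const, Finset.card_univ, Fintype.card_fin,
            nsmul_eq_mul]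
          linarith
  rw [← Finset.sum_coe_sort]
  calc _ ≤ (Finset.univ.image fun f => gapCode η (g f)).card *
        (Real.exp (k * (K + τ * P)) * partFn φ pot univ θ 0 T) :=
        sum_le_card_image_mul_partFn hcont hpot hθ (Real.exp_pos _).le _ _ y hsep hweight
    _ ≤ ((⌊τ / η⌋ + 2).toNat : ℝ) ^ k * (Real.exp (k * (K + τ * P)) * partFn φ pot univ θ 0 T) := by
        have := partFn_nonneg (φ := φ) (pot := pot) univ θ T
        gcongr
        exact_mod_cast card_image_gapCode_le hη0 g hgτ
    _ = _ := by rw [mul_pow, ← Real.exp_nat_mul]; ring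

end Gluing

/-- Gluing estimate (CT Proposition 4.3). If G has weak specification
at scale δ for orbit segments of length ≥ T₀ with maximum gap size τ, and the
potential has the Bowen property at scale ε = 1000·L_X·δ on G, then for every
γ ∈ I_δ there is C₁ > 0 with
∏_j Λ(G, γ, 0, t_j) ≤ C₁^k · Λ(M×ℝ⁺, θ, 0, T) for T = Σ t_i + (k−1)τ and
every 0 < θ < γ/2 − δ. -/
theorem prod_partFn_le
    {M : Type*} [MetricSpace M] [CompactSpace M]
    (φ : ℝ → M → M)
    (hcont : Continuous fun q : ℝ × M => φ q.1 q.2)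
    (hid : ∀ x, φ 0 x = x)
    (hadd : ∀ u v x, φ (u + v) x = φ u (φ v x))
    (L : ℝ) (hL : 1 ≤ L)
    (hLip : ∀ t ∈ Set.Icc (0:ℝ) 1, LipschitzWith (Real.toNNReal L) (φ t))
    (pot : M → ℝ) (hpot : Continuous pot)
    (δ ε : ℝ) (hδ : 0 < δ) (hε : ε = 1000 * L * δ)
    (GG : Set (M × ℝ))
    (T₀ τ : ℝ) (hT₀ : 0 < T₀) (hτ : 0 ≤ τ)
    (hspec : HasWeakSpec φ (GG ∩ {xt | T₀ ≤ xt.2}) δ τ)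
    (hbowen : HasBowenProp φ pot GG ε) :
    ∀ γ ∈ Set.Icc (4 * L * δ) (100 * L * δ), ∃ C₁ > (0:ℝ),
      ∀ (k : ℕ), 1 ≤ k → ∀ ts : Fin k → ℝ, (∀ i, T₀ ≤ ts i) →
        ∀ θ : ℝ, 0 < θ → θ < γ / 2 - δ →
          (∏ j, partFn φ pot GG γ 0 (ts j)) ≤
            C₁ ^ k * partFn φ pot Set.univ θ 0 ((∑ i, ts i) + ((k : ℝ) - 1) * τ) := by
  intro γ hγ
  obtain ⟨K, -, hK⟩ := hbowen
  obtain ⟨P, hP0, hP⟩ := exists_nonneg_abs_le_of_continuous hpot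
  obtain ⟨η, hη0, hη1, hη⟩ := exists_pos_dist_flow_le hcont hid (half_pos hδ)
  have hN : 0 < (⌊τ / η⌋ + 2).toNat := by
    have := Int.floor_nonneg.2 (div_nonneg hτ hη0.le)
    omega
  refine ⟨((⌊τ / η⌋ + 2).toNat : ℝ) * Real.exp (K + τ * P), by positivity,
    fun k hk ts hts θ hθ hθγ => ?_⟩
  refine prod_sSup_le _ ?_ (mul_nonneg (by positivity) (partFn_nonneg _ _ _)) fun r hr => ?_
  · rintro j - _ ⟨E, -, -, rfl⟩
    exact Finset.sum_nonneg fun x _ => (Real.exp_pos _).le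
  choose E hEG hEsep hr using fun j => hr j (Finset.mem_univ j)
  calc ∏ j, r j = ∑ f ∈ Fintype.piFinset E, Real.exp (∑ j, birkhoff φ pot (f j) (ts j)) := by
        simp_rw [hr, PhiSup_zero, Finset.prod_univ_sum, Real.exp_sum]
    _ ≤ _ := sum_exp_sum_birkhoff_le_partFn hcont hadd (by linarith) hLip hpot hη0 hη1 hη GG hτ
        hT₀ hspec (by rw [hε]; nlinarith) hK hP0 hP hθ (by linarith [hγ.1]) hk hts E hEG hEsep
end
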